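/- arXiv:1508.01009 — 3 statements merged into one kernel-verified Lean document; each statement's English description precedes it below -/
import Mathlib

section
/- For all a ≥ 0, x ≥ 0, and n ≥ 1, the generalized Baskakov weights sum to one: ∑_{k=0}^∞ W_{n,k}^a(x) = 1. -/
noncomputable def rising (n i : ℕ) : ℝ := ∏ j ∈ Finset.range i, ((n : ℝ) + j)

noncomputable def pk (n : ℕ) (a : ℝ) (k : ℕ) : ℝ :=
  ∑ i ∈ Finset.range (k + 1), (k.choose i : ℝ) * rising n i * a ^ (k - i)

noncomputable def W (n : ℕ) (a x : ℝ) (k : ℕ) : ℝ :=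
  Real.exp (-(a * x) / (1 + x)) * (pk n a k / (k.factorial : ℝ)) * x ^ k / (1 + x) ^ (k + n)

/-! With `t = x / (1 + x)`, so that `1 - t = (1 + x)⁻¹`, the weight `W n a x k` is
`e^{-at} (1 - t)^n` times the `k`-th coefficient of the Cauchy product of the negative binomial
series `∑ (n)_i tⁱ / i! = (1 - t)⁻ⁿ` with the exponential series `∑ (at)ʲ / j! = e^{at}`.
Both converge absolutely for `0 ≤ x`, so the weights sum to `e^{-at} (1 - t)^n (1 - t)⁻ⁿ e^{at} = 1`. -/

open Finset
open scoped Nat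

lemma rising_eq_ascFactorial (n i : ℕ) : rising n i = n.ascFactorial i := by
  simp [rising, Nat.ascFactorial_eq_prod_range]

lemma hasSum_rising_div_factorial_mul_pow (n : ℕ) {t : ℝ} (ht : ‖t‖ < 1) :
    HasSum (fun i ↦ rising n i / i ! * t ^ i) ((1 - t) ^ n)⁻¹ := by
  cases n with
  | zero =>
    convert hasSum_single 0 fun i hi ↦ ?_ using 1
    · simp [rising]
    · obtain ⟨j, rfl⟩ := Nat.exists_eq_succ_of_ne_zero hi
      simp [rising_eq_ascFactorial, Nat.zero_ascFactorial]
  | succ m =>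
    rw [← one_div]
    refine (hasSum_choose_mul_geometric_of_norm_lt_one m ht).congr_fun fun i ↦ ?_
    rw [rising_eq_ascFactorial, Nat.ascFactorial_eq_factorial_mul_choose, add_comm m i,
      Nat.choose_symm_add]
    push_cast
    field_simp

lemma pk_div_factorial_mul_pow (n : ℕ) (a t : ℝ) (k : ℕ) :
    pk n a k / k ! * t ^ k =
      ∑ i ∈ range (k + 1), rising n i / i ! * t ^ i * ((a * t) ^ (k - i) / (k - i)!) := by
  rw [pk, sum_div, sum_mul]
  refine sum_congr rfl fun i hi ↦ ?_
  have hik : i ≤ k := Nat.lt_succ_iff.1 (mem_range.1 hi)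
  rw [Nat.cast_choose ℝ hik, mul_pow, ← pow_mul_pow_sub t hik]
  field_simp

lemma W_eq_pk_div_factorial_mul_pow (n : ℕ) (a : ℝ) {x : ℝ} (hx : 1 + x ≠ 0) (k : ℕ) :
    W n a x k =
      Real.exp (-(a * (x / (1 + x)))) / (1 + x) ^ n * (pk n a k / k ! * (x / (1 + x)) ^ k) := by
  rw [W, div_pow, pow_add]
  field_simp

theorem baskakov_weights_sum_to_one_general (a x : ℝ) (hx : 0 ≤ x)
    (n : ℕ) :
    ∑' k : ℕ, W n a x k = 1 := by
  have hx1 : 0 < 1 + x := by linarith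
  have ht : ‖x / (1 + x)‖ < 1 := by
    rw [Real.norm_of_nonneg (by positivity), div_lt_one hx1]
    linarith
  have h1t : 1 - x / (1 + x) = (1 + x)⁻¹ := by field_simp; ring
  have hf := hasSum_rising_div_factorial_mul_pow n ht
  have hg := NormedSpace.expSeries_div_hasSum_exp (a * (x / (1 + x)))
  have hfg := hasSum_sum_range_mul_of_summable_norm (R := ℝ) hf.summable.norm hg.summable.norm
  rw [hf.tsum_eq, hg.tsum_eq, ← Real.exp_eq_exp_ℝ, h1t, inv_pow, inv_inv] at hfg
  simp_rw [W_eq_pk_div_factorial_mul_pow n a hx1.ne', pk_div_factorial_mul_pow]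
  rw [(hfg.mul_left _).tsum_eq, Real.exp_neg]
  field_simp

theorem baskakov_weights_sum_to_one (a x : ℝ) (ha : 0 ≤ a) (hx : 0 ≤ x)
    (n : ℕ) (hn : 1 ≤ n) :
    ∑' k : ℕ, W n a x k = 1 :=
  baskakov_weights_sum_to_one_general a x hx n
end

section
/- For all a ≥ 0, x ≥ 0, and n ≥ 1, B_n^a(t²; x) = x²/n + x/n + x² + a²x²/(n²(1+x)²) + 2ax²/(n(1+x)) + ax/(n²(1+x)). -/
/-!
The weight `W_{n,k}^a(x)` is the convolution of the Baskakov weights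
`b_{n,i}(x) = C(n+i-1, i) xⁱ / (1+x)^(n+i)` (a negative binomial law with mean `n x`) and the
Poisson weights of parameter `y = a x / (1+x)`, because `(n)_i / i! = C(n+i-1, i)`. Hence
`n² B_n^a(t²; x) = E[(V + P)²] = E[V²] + 2 E[V] E[P] + E[P²]` for independent `V`, `P` with these
laws. The moments of both laws follow from shift identities `(j+1) w(j+1) = c w'(j)`:
`E[P] = y`, `E[P²] = y + y²`, `E[V] = n x`, `E[V²] = n x ((n+1) x + 1)`.
-/

open Finset Nat

lemma HasSum.sum_antidiagonal_mul {f g : ℕ → ℝ} {A B : ℝ} (hf : HasSum f A) (hg : HasSum g B) :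
    HasSum (fun k => ∑ p ∈ antidiagonal k, f p.1 * g p.2) (A * B) := by
  have hf' : Summable fun i => ‖f i‖ := hf.summable.abs
  have hg' : Summable fun j => ‖g j‖ := hg.summable.abs
  rw [← hf.tsum_eq, ← hg.tsum_eq, tsum_mul_tsum_eq_tsum_sum_antidiagonal_of_summable_norm hf' hg']
  exact (summable_norm_sum_mul_antidiagonal_of_summable_norm hf' hg').of_norm.hasSum

lemma hasSum_mul_natCast_of_succ {f g : ℕ → ℝ} {S : ℝ} (hfg : ∀ j, f (j + 1) * (j + 1) = g j)
    (hg : HasSum g S) : HasSum (fun j => f j * j) S := by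
  rw [← hasSum_nat_add_iff' 1]
  simpa [hfg] using hg

lemma hasSum_mul_natCast_sq_of_succ {f g : ℕ → ℝ} {S : ℝ} (hfg : ∀ j, f (j + 1) * (j + 1) = g j)
    (hg : HasSum (fun j => g j * (j + 1)) S) : HasSum (fun j => f j * j ^ 2) S := by
  rw [← hasSum_nat_add_iff' 1]
  simpa [← hfg, sq, mul_assoc] using hg

def HasMoments (f : ℕ → ℝ) (m₀ m₁ m₂ : ℝ) : Prop :=
  HasSum f m₀ ∧ HasSum (fun k => f k * k) m₁ ∧ HasSum (fun k => f k * k ^ 2) m₂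

lemma HasMoments.sum_antidiagonal_mul {f g : ℕ → ℝ} {a₀ a₁ a₂ b₀ b₁ b₂ : ℝ}
    (hf : HasMoments f a₀ a₁ a₂) (hg : HasMoments g b₀ b₁ b₂) :
    HasSum (fun k => (∑ p ∈ antidiagonal k, f p.1 * g p.2) * k ^ 2)
      (a₂ * b₀ + 2 * (a₁ * b₁) + a₀ * b₂) := by
  obtain ⟨hf₀, hf₁, hf₂⟩ := hf
  obtain ⟨hg₀, hg₁, hg₂⟩ := hg
  refine (((hf₂.sum_antidiagonal_mul hg₀).add ((hf₁.sum_antidiagonal_mul hg₁).mul_left 2)).add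
    (hf₀.sum_antidiagonal_mul hg₂)).congr_fun fun k => ?_
  simp only [sum_mul, mul_sum, ← sum_add_distrib]
  refine sum_congr rfl fun p hp => ?_
  rw [← mem_antidiagonal.mp hp]
  push_cast
  ring

noncomputable def poissonWeight (y : ℝ) (j : ℕ) : ℝ := Real.exp (-y) * y ^ j / j !

lemma hasSum_poissonWeight (y : ℝ) : HasSum (poissonWeight y) 1 := by
  have h := (NormedSpace.expSeries_div_hasSum_exp y).mul_left (Real.exp (-y))
  rw [← Real.exp_eq_exp_ℝ, ← Real.exp_add, neg_add_cancel, Real.exp_zero] at h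
  exact h.congr_fun fun j => mul_div_assoc _ _ _

lemma poissonWeight_succ_mul (y : ℝ) (j : ℕ) :
    poissonWeight y (j + 1) * (j + 1) = y * poissonWeight y j := by
  simp only [poissonWeight, factorial_succ, pow_succ]
  push_cast
  field_simp

lemma poissonWeight_hasMoments (y : ℝ) : HasMoments (poissonWeight y) 1 y (y + y ^ 2) := by
  have h₀ := hasSum_poissonWeight y
  have h₁ : HasSum (fun j => poissonWeight y j * j) y := by
    simpa using hasSum_mul_natCast_of_succ (poissonWeight_succ_mul y) (h₀.mul_left y)
  refine ⟨h₀, h₁, hasSum_mul_natCast_sq_of_succ (poissonWeight_succ_mul y) ?_⟩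
  rw [show y + y ^ 2 = y * (y + 1) by ring]
  exact ((h₁.add h₀).mul_left y).congr_fun fun j => by ring

/-- The Baskakov basis function `b_{m+1,k}`; indexing by `m = n - 1` avoids truncated
subtraction. -/
noncomputable def baskakovWeight (m : ℕ) (x : ℝ) (k : ℕ) : ℝ :=
  (k + m).choose m * x ^ k / (1 + x) ^ (k + m + 1)

lemma hasSum_baskakovWeight (m : ℕ) {x : ℝ} (hx : 0 ≤ x) : HasSum (baskakovWeight m x) 1 := by
  have hx₁ : 0 < 1 + x := by linarith
  have hr : ‖x / (1 + x)‖ < 1 := by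
    rw [Real.norm_of_nonneg (by positivity), div_lt_one hx₁]; linarith
  have h := (hasSum_choose_mul_geometric_of_norm_lt_one m hr).mul_right ((1 + x)⁻¹ ^ (m + 1))
  rw [one_sub_div hx₁.ne', add_sub_cancel_right, one_div, one_div, inv_pow,
    inv_mul_cancel₀ (by positivity)] at h
  refine h.congr_fun fun k => ?_
  rw [baskakovWeight, div_pow, add_assoc, pow_add]
  field_simp

lemma baskakovWeight_succ_mul (m : ℕ) (x : ℝ) (k : ℕ) :
    baskakovWeight m x (k + 1) * (k + 1) = (m + 1) * x * baskakovWeight (m + 1) x k := by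
  have hchoose : ((k + 1 + m).choose m : ℝ) * (k + 1) = (k + 1 + m).choose (m + 1) * (m + 1) := by
    have := choose_succ_right_eq (k + 1 + m) m
    rw [Nat.add_sub_cancel] at this
    exact_mod_cast this.symm
  simp only [baskakovWeight, show k + (m + 1) = k + 1 + m by omega]
  rw [mul_div_assoc, mul_div_assoc, mul_right_comm, hchoose, pow_succ]
  ring

lemma hasSum_baskakovWeight_mul_natCast (m : ℕ) {x : ℝ} (hx : 0 ≤ x) :
    HasSum (fun k => baskakovWeight m x k * k) ((m + 1) * x) := by
  simpa using hasSum_mul_natCast_of_succ (baskakovWeight_succ_mul m x)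
    ((hasSum_baskakovWeight (m + 1) hx).mul_left ((m + 1) * x))

lemma baskakovWeight_hasMoments (m : ℕ) {x : ℝ} (hx : 0 ≤ x) :
    HasMoments (baskakovWeight m x) 1 ((m + 1) * x) ((m + 1) * x * ((m + 2) * x + 1)) := by
  refine ⟨hasSum_baskakovWeight m hx, hasSum_baskakovWeight_mul_natCast m hx,
    hasSum_mul_natCast_sq_of_succ (baskakovWeight_succ_mul m x) ?_⟩
  have h := ((hasSum_baskakovWeight_mul_natCast (m + 1) hx).add
    (hasSum_baskakovWeight (m + 1) hx)).mul_left ((m + 1) * x)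
  push_cast at h
  rw [add_assoc, one_add_one_eq_two] at h
  exact h.congr_fun fun k => by ring

lemma rising_succ (m i : ℕ) : rising (m + 1) i = i ! * (i + m).choose m := by
  rw [rising, add_comm i m, Nat.choose_symm_add]
  exact_mod_cast (ascFactorial_eq_prod_range (m + 1) i).symm.trans
    (ascFactorial_eq_factorial_mul_choose m i)

lemma W_eq_sum_antidiagonal (m : ℕ) (a : ℝ) {x : ℝ} (hx : 1 + x ≠ 0) (k : ℕ) :
    W (m + 1) a x k =
      ∑ p ∈ antidiagonal k, baskakovWeight m x p.1 * poissonWeight (a * x / (1 + x)) p.2 := by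
  rw [W, pk, sum_div, mul_sum, sum_mul, sum_div,
    Nat.sum_antidiagonal_eq_sum_range_succ (fun i j => baskakovWeight m x i * poissonWeight _ j)]
  refine sum_congr rfl fun i hi => ?_
  obtain ⟨j, rfl⟩ := Nat.exists_eq_add_of_le (mem_range_succ_iff.mp hi)
  have hfact : ((i + j).choose i : ℝ) * i ! * j ! = (i + j)! := by
    rw [Nat.choose_symm_add]
    exact_mod_cast add_choose_mul_factorial_mul_factorial i j
  have hchoose : ((i + j).choose i : ℝ) ≠ 0 :=
    Nat.cast_ne_zero.mpr (Nat.choose_pos (by omega)).ne'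
  rw [Nat.add_sub_cancel_left, rising_succ, baskakovWeight, poissonWeight, ← hfact, neg_div, div_pow]
  field_simp
  ring

theorem baskakov_second_moment_general (a x : ℝ) (hx : 0 ≤ x)
    (n : ℕ) (hn : 1 ≤ n) :
    ∑' k : ℕ, W n a x k * ((k : ℝ) / n) ^ 2 =
      x ^ 2 / n + x / n + x ^ 2 + a ^ 2 * x ^ 2 / (n ^ 2 * (1 + x) ^ 2)
        + 2 * a * x ^ 2 / (n * (1 + x)) + a * x / (n ^ 2 * (1 + x)) := by
  obtain ⟨m, rfl⟩ : ∃ m, n = m + 1 := ⟨n - 1, by omega⟩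
  have hx₁ : 1 + x ≠ 0 := by positivity
  have h := ((baskakovWeight_hasMoments m hx).sum_antidiagonal_mul
    (poissonWeight_hasMoments (a * x / (1 + x)))).div_const (((m + 1 : ℕ) : ℝ) ^ 2)
  rw [(h.congr_fun fun k => by rw [W_eq_sum_antidiagonal m a hx₁]; ring).tsum_eq]
  push_cast
  field_simp
  ring

theorem baskakov_second_moment (a x : ℝ) (ha : 0 ≤ a) (hx : 0 ≤ x)
    (n : ℕ) (hn : 1 ≤ n) :
    ∑' k : ℕ, W n a x k * ((k : ℝ) / n) ^ 2 =
      x ^ 2 / n + x / n + x ^ 2 + a ^ 2 * x ^ 2 / (n ^ 2 * (1 + x) ^ 2)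
        + 2 * a * x ^ 2 / (n * (1 + x)) + a * x / (n ^ 2 * (1 + x)) :=
  baskakov_second_moment_general a x hx n hn
end

section
/- Let L be a positive linear functional on bounded continuous functions on [0,∞) with L(1)=1, let x ≥ 0, and let f be continuously differentiable on [0,∞) with f' uniformly continuous. Then for any δ > 0, |L(f) − f(x)| ≤ |f'(x)|·|L(t−x)| + ω(f';δ)·√(L((t−x)²))·(1 + δ^{-1}√(L((t−x)²))). -/
/-!
Write `f t = f x + f' x * (t - x) + R t`. On the segment between `x` and `t`, chaining steps of
length `δ` gives `|f' y - f' x| ≤ (1 + |t - x| / δ) * ω(f'; δ)`, so the mean value inequality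
yields `|R t| ≤ ω(f'; δ) * (|t - x| + (t - x)² / δ)`. Applying the positive normalized functional
`L` and bounding `L |t - x| ≤ √(L (t - x)²)` by Cauchy–Schwarz gives the estimate.
-/

noncomputable def omega (f : ℝ → ℝ) (δ : ℝ) : ℝ :=
  sSup {d : ℝ | ∃ t s : ℝ, 0 ≤ t ∧ 0 ≤ s ∧ |t - s| ≤ δ ∧ d = |f t - f s|}

section PositiveFunctional

variable {α : Type*} {s : Set α} (L : (α → ℝ) →ₗ[ℝ] ℝ)

lemma map_le_map_of_le (hpos : ∀ g : α → ℝ, (∀ t ∈ s, 0 ≤ g t) → 0 ≤ L g) {g h : α → ℝ}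
    (hgh : ∀ t ∈ s, g t ≤ h t) : L g ≤ L h := by
  have := hpos (h - g) fun t ht => sub_nonneg.mpr (hgh t ht)
  rwa [map_sub, sub_nonneg] at this

lemma abs_map_le_of_abs_le (hpos : ∀ g : α → ℝ, (∀ t ∈ s, 0 ≤ g t) → 0 ≤ L g) {g h : α → ℝ}
    (hgh : ∀ t ∈ s, |g t| ≤ h t) : |L g| ≤ L h := by
  refine abs_le.mpr ⟨?_, map_le_map_of_le L hpos fun t ht => (abs_le.mp (hgh t ht)).2⟩
  rw [← map_neg]
  exact map_le_map_of_le L hpos fun t ht => (abs_le.mp (hgh t ht)).1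

/-- Cauchy–Schwarz for a positive normalized functional: with `λ = L |u|`, positivity of
`L ((|u| - λ)²)` reads `λ² ≤ L (u²)`. -/
lemma map_abs_le_sqrt_map_sq (hpos : ∀ g : α → ℝ, (∀ t ∈ s, 0 ≤ g t) → 0 ≤ L g)
    (hone : L (fun _ => 1) = 1) (u : α → ℝ) :
    L (fun t => |u t|) ≤ √(L (fun t => u t ^ 2)) := by
  set m := L (fun t => |u t|)
  have hsq : L ((2 * m) • (fun t => |u t|) - m ^ 2 • fun _ => 1) ≤ L (fun t => u t ^ 2) :=
    map_le_map_of_le L hpos fun t _ => by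
      simp only [Pi.sub_apply, Pi.smul_apply, smul_eq_mul]
      nlinarith [sq_nonneg (|u t| - m), sq_abs (u t)]
  rw [map_sub, map_smul, map_smul, hone, smul_eq_mul, smul_eq_mul] at hsq
  exact (le_abs_self m).trans (Real.abs_le_sqrt (by linarith))

lemma abs_map_sub_sub_mul_le (hpos : ∀ g : α → ℝ, (∀ t ∈ s, 0 ≤ g t) → 0 ≤ L g)
    (hone : L (fun _ => 1) = 1) {g u : α → ℝ} {a b c d : ℝ} (hc : 0 ≤ c)
    (hg : ∀ t ∈ s, |g t - a - b * u t| ≤ c * |u t| + d * u t ^ 2) :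
    |L g - a - b * L u| ≤ c * √(L (fun t => u t ^ 2)) + d * L (fun t => u t ^ 2) := by
  have hlin : L (g - a • (fun _ => 1) - b • u) = L g - a - b * L u := by
    rw [map_sub, map_sub, map_smul, map_smul, hone, smul_eq_mul, smul_eq_mul, mul_one]
  have hmaj : L (c • (fun t => |u t|) + d • fun t => u t ^ 2)
      = c * L (fun t => |u t|) + d * L (fun t => u t ^ 2) := by
    rw [map_add, map_smul, map_smul, smul_eq_mul, smul_eq_mul]
  rw [← hlin]
  calc _ ≤ _ := abs_map_le_of_abs_le L hpos fun t ht => by simpa using hg t ht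
    _ = _ := hmaj
    _ ≤ _ := by grw [map_abs_le_sqrt_map_sq L hpos hone u]

end PositiveFunctional

section Oscillation

variable {s : Set ℝ} {g : ℝ → ℝ} {δ C : ℝ}

lemma abs_sub_le_nat_mul_of_abs_sub_le [s.OrdConnected] (hδ : 0 ≤ δ)
    (hC : ∀ a ∈ s, ∀ b ∈ s, |a - b| ≤ δ → |g a - g b| ≤ C) (n : ℕ) :
    ∀ a ∈ s, ∀ b ∈ s, |a - b| ≤ n * δ → |g a - g b| ≤ n * C := by
  induction n with
  | zero =>
    intro a _ b _ hab
    have : a = b := sub_eq_zero.mp (by simpa using hab)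
    simp [this]
  | succ n ih =>
    intro a ha b hb hab
    wlog hle : a ≤ b generalizing a b
    · rw [abs_sub_comm] at hab ⊢
      exact this b hb a ha hab (le_of_not_ge hle)
    rw [abs_sub_comm, abs_of_nonneg (sub_nonneg.mpr hle)] at hab
    set c := max a (b - δ)
    have hc : c ∈ s := Set.OrdConnected.out ‹_› ha hb ⟨le_max_left _ _, max_le hle (by linarith)⟩
    have hac : |a - c| ≤ n * δ := by
      rw [abs_sub_comm, abs_of_nonneg (sub_nonneg.mpr (le_max_left _ _))]
      push_cast at hab
      exact sub_le_iff_le_add.mpr (max_le (by nlinarith [n.cast_nonneg (α := ℝ)]) (by linarith))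
    have hcb : |c - b| ≤ δ := by
      rw [abs_sub_comm, abs_of_nonneg (by linarith [max_le hle (by linarith : b - δ ≤ b)])]
      linarith [le_max_right a (b - δ)]
    calc |g a - g b| ≤ |g a - g c| + |g c - g b| := abs_sub_le _ _ _
      _ ≤ n * C + C := add_le_add (ih a ha c hc hac) (hC c hc b hb hcb)
      _ = (n + 1 : ℕ) * C := by push_cast; ring

lemma abs_sub_le_one_add_div_mul_of_abs_sub_le [s.OrdConnected] (hδ : 0 < δ)
    (hC : ∀ a ∈ s, ∀ b ∈ s, |a - b| ≤ δ → |g a - g b| ≤ C) {a b : ℝ} (ha : a ∈ s) (hb : b ∈ s) :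
    |g a - g b| ≤ (1 + |a - b| / δ) * C := by
  have hC0 : 0 ≤ C := (abs_nonneg _).trans (hC a ha a ha (by simpa using hδ.le))
  set n := ⌈|a - b| / δ⌉₊
  have hn : |a - b| ≤ n * δ := (div_le_iff₀ hδ).mp (Nat.le_ceil _)
  have hn' : (n : ℝ) ≤ 1 + |a - b| / δ := by
    linarith [Nat.ceil_lt_add_one (div_nonneg (abs_nonneg (a - b)) hδ.le)]
  exact (abs_sub_le_nat_mul_of_abs_sub_le hδ.le hC n a ha b hb hn).trans
    (mul_le_mul_of_nonneg_right hn' hC0)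

end Oscillation

section ModulusOfContinuity

variable {δ : ℝ}

lemma omega_nonneg (g : ℝ → ℝ) (δ : ℝ) : 0 ≤ omega g δ :=
  Real.sSup_nonneg fun _ ⟨_, _, _, _, _, hd⟩ => hd ▸ abs_nonneg _

/-- Uniform continuity bounds the oscillation over steps of some size `η`; chaining then bounds
it over steps of size `δ`, so the supremum defining `omega` is taken over a bounded set. -/
lemma abs_sub_le_omega {g : ℝ → ℝ} (hg : UniformContinuousOn g (Set.Ici 0)) {a b : ℝ}
    (ha : 0 ≤ a) (hb : 0 ≤ b) (hab : |a - b| ≤ δ) : |g a - g b| ≤ omega g δ := by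
  obtain ⟨η, hη, hη1⟩ := Metric.uniformContinuousOn_iff_le.mp hg 1 one_pos
  refine le_csSup ⟨1 + δ / η, ?_⟩ ⟨a, b, ha, hb, hab, rfl⟩
  rintro _ ⟨t, s, ht, hs, hts, rfl⟩
  calc |g t - g s| ≤ (1 + |t - s| / η) * 1 :=
        abs_sub_le_one_add_div_mul_of_abs_sub_le hη (fun a ha b hb h => hη1 a ha b hb h) ht hs
    _ ≤ 1 + δ / η := by rw [mul_one]; gcongr

lemma abs_sub_sub_deriv_mul_le_omega {f f' : ℝ → ℝ}
    (hderiv : ∀ t, 0 ≤ t → HasDerivAt f (f' t) t) (hf' : UniformContinuousOn f' (Set.Ici 0))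
    (hδ : 0 < δ) {x t : ℝ} (hx : 0 ≤ x) (ht : 0 ≤ t) :
    |f t - f x - f' x * (t - x)| ≤ omega f' δ * (|t - x| + (t - x) ^ 2 / δ) := by
  have hsub : Set.uIcc x t ⊆ Set.Ici 0 := (Set.ordConnected_Ici (a := (0 : ℝ))).uIcc_subset hx ht
  have hbound : ∀ y ∈ Set.uIcc x t, ‖f' y - f' x‖ ≤ (1 + |t - x| / δ) * omega f' δ :=
    fun y hy => calc
      |f' y - f' x| ≤ (1 + |y - x| / δ) * omega f' δ :=
        abs_sub_le_one_add_div_mul_of_abs_sub_le (s := Set.Ici 0) hδ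
          (fun a ha b hb => abs_sub_le_omega hf' ha hb) (hsub hy) hx
      _ ≤ (1 + |t - x| / δ) * omega f' δ := by
        have := omega_nonneg f' δ
        gcongr (1 + ?_ / _) * _
        exact Set.abs_sub_left_of_mem_uIcc hy
  have hmvt := Convex.norm_image_sub_le_of_norm_hasDerivWithin_le
    (f := fun y => f y - f' x * y)
    (fun y hy => HasDerivAt.hasDerivWithinAt <| by
      simpa only [mul_one] using (hderiv y (hsub hy)).fun_sub ((hasDerivAt_id' y).const_mul (f' x)))
    hbound (convex_uIcc x t) Set.left_mem_uIcc Set.right_mem_uIcc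
  calc |f t - f x - f' x * (t - x)| = |(f t - f' x * t) - (f x - f' x * x)| := by ring_nf
    _ ≤ (1 + |t - x| / δ) * omega f' δ * |t - x| := hmvt
    _ = omega f' δ * (|t - x| + (t - x) ^ 2 / δ) := by rw [← sq_abs (t - x)]; ring

end ModulusOfContinuity

theorem positive_functional_derivative_estimate
    (L : (ℝ → ℝ) →ₗ[ℝ] ℝ)
    (hpos : ∀ f : ℝ → ℝ, (∀ t, 0 ≤ t → 0 ≤ f t) → 0 ≤ L f)
    (hone : L (fun _ => 1) = 1)
    (x : ℝ) (hx : 0 ≤ x)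
    (f f' : ℝ → ℝ) (hderiv : ∀ t, 0 ≤ t → HasDerivAt f (f' t) t)
    (hf' : UniformContinuousOn f' (Set.Ici 0))
    (δ : ℝ) (hδ : 0 < δ) :
    |L f - f x| ≤ |f' x| * |L (fun t => t - x)|
      + omega f' δ * Real.sqrt (L (fun t => (t - x) ^ 2))
          * (1 + δ⁻¹ * Real.sqrt (L (fun t => (t - x) ^ 2))) := by
  set ω := omega f' δ
  set Q := L (fun t => (t - x) ^ 2)
  have hremainder : |L f - f x - f' x * L (fun t => t - x)| ≤ ω * √Q + ω / δ * Q :=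
    abs_map_sub_sub_mul_le (s := Set.Ici 0) L hpos hone (omega_nonneg f' δ) fun t ht =>
      (abs_sub_sub_deriv_mul_le_omega hderiv hf' hδ hx ht).trans_eq (by ring)
  have hsplit := abs_sub_abs_le_abs_sub (L f - f x) (f' x * L (fun t => t - x))
  have hsqrt : √Q * √Q = Q := Real.mul_self_sqrt (hpos _ fun t _ => sq_nonneg (t - x))
  calc |L f - f x| ≤ |f' x| * |L (fun t => t - x)| + (ω * √Q + ω / δ * Q) := by
        rw [abs_mul] at hsplit; linarith
    _ = |f' x| * |L (fun t => t - x)| + ω * √Q * (1 + δ⁻¹ * √Q) := by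
        linear_combination -(ω * δ⁻¹) * hsqrt
end
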